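/- There is an absolute constant C₀ such that the following holds for every integer n ≥ 2, every real ε > 0, and every integer d' ≥ C₀·log n. (a) If z₁,…,zₙ are i.i.d. random vectors uniform on [0,ε]^{d'}, then with probability at least 1 − 1/n, every pair i ≠ j satisfies ‖zᵢ − zⱼ‖₁ ≥ ε·d'/6. (b) Deterministically: for any x₁,…,xₙ ∈ ℝ^d, any ζ₁,…,ζₙ ∈ [0,ε]^{d'}, and yᵢ := (xᵢ, ζᵢ) ∈ ℝ^{d+d'}, every b ∈ ℝⁿ with Σᵢ bᵢ = 0 and Σᵢ max(bᵢ, 0) ≤ n satisfies EMD_X(b) ≤ EMD_Y(b) ≤ EMD_X(b) + ε·d'·n, where EMD_X and EMD_Y are the min-cost-flow values with edge costs ‖xᵢ − xⱼ‖₁ and ‖yᵢ − yⱼ‖₁ respectively. -/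

import Mathlib

open Finset MeasureTheory

/-- ℓ₁ distance on functions `ι → ℝ`. -/
noncomputable def l1dist {ι : Type} [Fintype ι] (u v : ι → ℝ) : ℝ := ∑ k, |u k - v k|

/-- Min-cost-flow Earth Mover's Distance of a vector `b` (with `∑ b = 0`) with respect to
the cost matrix `cost`. -/
noncomputable def EMDgen {ι : Type} [Fintype ι] (cost : ι → ι → ℝ) (b : ι → ℝ) : ℝ :=
  sInf { c : ℝ | ∃ γ : ι → ι → ℝ, (∀ i j, 0 ≤ γ i j) ∧
    (∀ i, ∑ j, γ i j = max (b i) 0) ∧ (∀ j, ∑ i, γ i j = max (-(b j)) 0) ∧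
    c = ∑ i, ∑ j, γ i j * cost i j }

/-- The uniform probability measure on the cube `[0, r]^d ⊆ ℝ^d`. -/
noncomputable def uniformCube (d : ℕ) (r : ℝ) : Measure (Fin d → ℝ) :=
  (volume (Set.univ.pi fun _ : Fin d => Set.Icc (0 : ℝ) r))⁻¹ •
    volume.restrict (Set.univ.pi fun _ : Fin d => Set.Icc (0 : ℝ) r)

/-!
(a) For a fixed pair `i ≠ j` the coordinate gaps `|z i k - z j k|` are i.i.d. copies of
`|X - Y|` with `X, Y` uniform on `[0, ε]`. Since `exp (-u) ≤ 1 - u + u² / 2` for `u ≥ 0`,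
`E exp (-|X - Y| / ε) ≤ 1 - 1/3 + 1/12 = 3/4 ≤ exp (-1/4)`, so the exponential Markov
inequality bounds the probability that the pair is `ℓ₁`-closer than `ε d' / 6` by
`exp (d'/6) (3/4)^d' ≤ exp (-d'/12) ≤ n⁻³` once `d' ≥ 36 log n`. A union bound over the `n²`
ordered pairs leaves `1/n`.

(b) Both cost matrices have the same feasible flows, and a flow of `b` carries total mass
`∑ bᵢ⁺ ≤ n`. The added cost `‖ζᵢ - ζⱼ‖₁` lies in `[0, ε d']`, so the cost of every flow grows by
between `0` and `ε d' n`.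
-/

open ProbabilityTheory
open scoped ENNReal

section Flow

variable {ι : Type} [Fintype ι]

def IsFlow (b : ι → ℝ) (γ : ι → ι → ℝ) : Prop :=
  (∀ i j, 0 ≤ γ i j) ∧ (∀ i, ∑ j, γ i j = max (b i) 0) ∧ (∀ j, ∑ i, γ i j = max (-(b j)) 0)

def flowCost (cost γ : ι → ι → ℝ) : ℝ := ∑ i, ∑ j, γ i j * cost i j

lemma EMDgen_eq_sInf_image (cost : ι → ι → ℝ) (b : ι → ℝ) :
    EMDgen cost b = sInf (flowCost cost '' {γ | IsFlow b γ}) := by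
  simp only [EMDgen, Set.image, IsFlow, flowCost, Set.mem_ofPred_eq, and_assoc, eq_comm]

lemma flowCost_nonneg {cost γ : ι → ι → ℝ} (hcost : ∀ i j, 0 ≤ cost i j)
    (hγ : ∀ i j, 0 ≤ γ i j) : 0 ≤ flowCost cost γ :=
  sum_nonneg fun i _ => sum_nonneg fun j _ => mul_nonneg (hγ i j) (hcost i j)

lemma flowCost_add (c e γ : ι → ι → ℝ) :
    flowCost (fun i j => c i j + e i j) γ = flowCost c γ + flowCost e γ := by
  simp only [flowCost, mul_add, sum_add_distrib]

lemma flowCost_le_mul {b : ι → ℝ} {γ e : ι → ι → ℝ} {K : ℝ} (hγ : IsFlow b γ)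
    (he : ∀ i j, e i j ≤ K) : flowCost e γ ≤ K * ∑ i, max (b i) 0 := by
  calc flowCost e γ ≤ ∑ i, ∑ j, γ i j * K := by
        unfold flowCost; gcongr with i _ j _; exacts [hγ.1 i j, he i j]
    _ = K * ∑ i, max (b i) 0 := by
        simp_rw [← sum_mul, hγ.2.1, mul_comm]

lemma EMDgen_le_add_of_flowCost_le {c c' : ι → ι → ℝ} {b : ι → ℝ} {δ : ℝ}
    (hc' : ∀ i j, 0 ≤ c' i j) (hδ : 0 ≤ δ)
    (h : ∀ γ, IsFlow b γ → flowCost c' γ ≤ flowCost c γ + δ) :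
    EMDgen c' b ≤ EMDgen c b + δ := by
  rw [EMDgen_eq_sInf_image, EMDgen_eq_sInf_image]
  rcases Set.eq_empty_or_nonempty {γ | IsFlow b γ} with hF | hF
  · -- without feasible flows both sides are `sInf ∅ = 0`
    simp [hF, hδ]
  have hbdd : BddBelow (flowCost c' '' {γ | IsFlow b γ}) :=
    ⟨0, by rintro _ ⟨γ, hγ, rfl⟩; exact flowCost_nonneg hc' hγ.1⟩
  rw [← sub_le_iff_le_add]
  refine le_csInf (hF.image _) ?_
  rintro _ ⟨γ, hγ, rfl⟩
  rw [sub_le_iff_le_add]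
  exact (csInf_le hbdd ⟨γ, hγ, rfl⟩).trans (h γ hγ)

theorem EMDgen_le_EMDgen_add {c e : ι → ι → ℝ} (hc : ∀ i j, 0 ≤ c i j)
    (he : ∀ i j, 0 ≤ e i j) (b : ι → ℝ) :
    EMDgen c b ≤ EMDgen (fun i j => c i j + e i j) b := by
  simpa using EMDgen_le_add_of_flowCost_le (δ := 0) hc le_rfl fun γ hγ => by
    rw [flowCost_add]; linarith [flowCost_nonneg he hγ.1]

theorem EMDgen_add_le {c e : ι → ι → ℝ} {K : ℝ} (hc : ∀ i j, 0 ≤ c i j)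
    (he : ∀ i j, 0 ≤ e i j) (heK : ∀ i j, e i j ≤ K) (hK : 0 ≤ K) (b : ι → ℝ) :
    EMDgen (fun i j => c i j + e i j) b ≤ EMDgen c b + K * ∑ i, max (b i) 0 := by
  refine EMDgen_le_add_of_flowCost_le (fun i j => add_nonneg (hc i j) (he i j))
    (mul_nonneg hK (sum_nonneg fun i _ => le_max_right _ _)) fun γ hγ => ?_
  rw [flowCost_add]
  exact add_le_add_right (flowCost_le_mul hγ heK) _

end Flow

lemma l1dist_nonneg {ι : Type} [Fintype ι] (u v : ι → ℝ) : 0 ≤ l1dist u v :=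
  sum_nonneg fun _ _ => abs_nonneg _

lemma l1dist_le_of_mem_Icc {ι : Type} [Fintype ι] {u v : ι → ℝ} {r : ℝ}
    (hu : ∀ k, u k ∈ Set.Icc 0 r) (hv : ∀ k, v k ∈ Set.Icc 0 r) :
    l1dist u v ≤ r * Fintype.card ι := by
  calc l1dist u v ≤ ∑ _k : ι, r := sum_le_sum fun k _ => abs_sub_le_iff.2
        ⟨by linarith [(hu k).2, (hv k).1], by linarith [(hu k).1, (hv k).2]⟩
    _ = r * Fintype.card ι := by rw [sum_const, card_univ, nsmul_eq_mul, mul_comm]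

theorem ProbabilityTheory.cond_pi {ι : Type*} [Fintype ι] {α : ι → Type*}
    [∀ i, MeasurableSpace (α i)] (μ : ∀ i, Measure (α i)) [∀ i, SigmaFinite (μ i)]
    {s : ∀ i, Set (α i)} (hs : ∀ i, μ i (s i) ≠ ∞) :
    (Measure.pi μ)[|Set.univ.pi s] = Measure.pi fun i => (μ i)[|s i] := by
  refine (Measure.pi_eq fun t ht => ?_).symm
  simp only [cond, Measure.smul_apply, smul_eq_mul, Measure.restrict_pi_pi, Measure.pi_pi,
    prod_mul_distrib]
  rw [ENNReal.prod_inv_distrib fun i _ j _ _ => Or.inr (hs j)]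

lemma uniformCube_eq_pi (d : ℕ) (r : ℝ) :
    uniformCube d r = Measure.pi fun _ : Fin d => volume[|Set.Icc (0 : ℝ) r] := by
  rw [← cond_pi _ fun _ => measure_Icc_lt_top.ne]
  rfl

lemma isProbabilityMeasure_cond_Icc {a b : ℝ} (hab : a < b) :
    IsProbabilityMeasure (volume[|Set.Icc a b]) :=
  cond_isProbabilityMeasure_of_finite (by simpa using hab) measure_Icc_lt_top.ne

lemma lintegral_ofReal_cond_Icc {a b : ℝ} (hab : a < b) {f : ℝ → ℝ}
    (hf : ContinuousOn f (Set.Icc a b)) (hf₀ : ∀ x ∈ Set.Icc a b, 0 ≤ f x) :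
    ∫⁻ x, ENNReal.ofReal (f x) ∂volume[|Set.Icc a b] =
      ENNReal.ofReal ((b - a)⁻¹ * ∫ x in a..b, f x) := by
  rw [ProbabilityTheory.cond, lintegral_smul_measure, ← ofReal_integral_eq_lintegral_ofReal
    hf.integrableOn_Icc ((ae_restrict_iff' measurableSet_Icc).2 (.of_forall hf₀)),
    Real.volume_Icc, intervalIntegral.integral_of_le hab.le, integral_Icc_eq_integral_Ioc,
    smul_eq_mul, ENNReal.ofReal_mul (inv_nonneg.2 (sub_nonneg.2 hab.le)),
    ENNReal.ofReal_inv_of_pos (sub_pos.2 hab)]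

section Moments

open intervalIntegral

lemma integral_abs_sub_eq {a b x : ℝ} (hx : x ∈ Set.Icc a b) :
    ∫ y in a..b, |x - y| = ((x - a) ^ 2 + (b - x) ^ 2) / 2 := by
  have hi : ∀ u v, IntervalIntegrable (fun y => |x - y|) volume u v :=
    fun u v => (by fun_prop : Continuous fun y => |x - y|).intervalIntegrable u v
  have hleft : ∫ y in a..x, |x - y| = ∫ y in a..x, (x - y) :=
    integral_congr fun y hy => abs_of_nonneg (by rw [Set.uIcc_of_le hx.1] at hy; linarith [hy.2])
  have hright : ∫ y in x..b, |x - y| = ∫ y in x..b, (y - x) :=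
    integral_congr fun y hy => abs_sub_comm x y ▸
      abs_of_nonneg (by rw [Set.uIcc_of_le hx.2] at hy; linarith [hy.1])
  rw [← integral_add_adjacent_intervals (hi a x) (hi x b), hleft, hright,
    integral_comp_sub_left (fun u => u), integral_comp_sub_right (fun u => u), integral_id,
    integral_id]
  ring

lemma integral_sq_sub_eq (a b x : ℝ) :
    ∫ y in a..b, (x - y) ^ 2 = ((x - a) ^ 3 - (x - b) ^ 3) / 3 := by
  rw [integral_comp_sub_left (fun u => u ^ 2), integral_pow]
  ring

lemma Real.exp_neg_le_one_sub_add_sq_div_two {u : ℝ} (hu : 0 ≤ u) :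
    Real.exp (-u) ≤ 1 - u + u ^ 2 / 2 := by
  have hq : 0 ≤ 1 - u + u ^ 2 / 2 := by nlinarith [sq_nonneg (u - 1)]
  rw [Real.exp_neg, inv_le_iff_one_le_mul₀ (Real.exp_pos u)]
  -- `(1 - u + u²/2) (1 + u + u²/2) = 1 + u⁴/4`
  nlinarith [mul_le_mul_of_nonneg_left (Real.quadratic_le_exp_of_nonneg hu) hq, sq_nonneg (u ^ 2)]

lemma integral_one_sub_abs_add_sq {ε x : ℝ} (hε : 0 < ε) (hx : x ∈ Set.Icc 0 ε) :
    ε⁻¹ * ∫ y in (0 : ℝ)..ε, (1 - |x - y| / ε + (x - y) ^ 2 / (2 * ε ^ 2)) =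
      2 / 3 + x / (2 * ε) - x ^ 2 / (2 * ε ^ 2) := by
  rw [intervalIntegral.integral_add, intervalIntegral.integral_sub, intervalIntegral.integral_div,
    intervalIntegral.integral_div, integral_abs_sub_eq hx, integral_sq_sub_eq]
  · simp only [intervalIntegral.integral_const, sub_zero, smul_eq_mul, mul_one]
    field_simp
    ring
  all_goals exact Continuous.intervalIntegrable (by fun_prop) _ _

lemma integral_two_thirds_add_sub {ε : ℝ} (hε : 0 < ε) :
    ε⁻¹ * ∫ x in (0 : ℝ)..ε, (2 / 3 + x / (2 * ε) - x ^ 2 / (2 * ε ^ 2)) = 3 / 4 := by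
  rw [intervalIntegral.integral_sub, intervalIntegral.integral_add,
    intervalIntegral.integral_const, intervalIntegral.integral_div,
    intervalIntegral.integral_div, integral_id, integral_pow]
  · field_simp
    ring
  all_goals exact Continuous.intervalIntegrable (by fun_prop) _ _

lemma lintegral_exp_neg_abs_sub_le {ε : ℝ} (hε : 0 < ε) :
    ∫⁻ q, ENNReal.ofReal (Real.exp (-(ε⁻¹ * |q.1 - q.2|)))
      ∂(volume[|Set.Icc 0 ε]).prod (volume[|Set.Icc 0 ε]) ≤ ENNReal.ofReal (3 / 4) := by
  have := isProbabilityMeasure_cond_Icc hε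
  set Q : ℝ → ℝ → ℝ := fun x y => 1 - |x - y| / ε + (x - y) ^ 2 / (2 * ε ^ 2) with hQ
  have hQ_eq : ∀ x y, Q x y = 1 - ε⁻¹ * |x - y| + (ε⁻¹ * |x - y|) ^ 2 / 2 := fun x y => by
    rw [hQ, mul_pow, sq_abs]; field_simp
  have hQ_nonneg : ∀ x y, 0 ≤ Q x y := fun x y => by
    rw [hQ_eq]; nlinarith [sq_nonneg (ε⁻¹ * |x - y| - 1)]
  have hinner : ∀ x ∈ Set.Icc 0 ε, ∫⁻ y, ENNReal.ofReal (Q x y) ∂volume[|Set.Icc 0 ε] =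
      ENNReal.ofReal (2 / 3 + x / (2 * ε) - x ^ 2 / (2 * ε ^ 2)) := fun x hx => by
    rw [lintegral_ofReal_cond_Icc hε (by fun_prop) fun y _ => hQ_nonneg x y, sub_zero,
      integral_one_sub_abs_add_sq hε hx]
  calc _ ≤ ∫⁻ q, ENNReal.ofReal (Q q.1 q.2) ∂(volume[|Set.Icc 0 ε]).prod (volume[|Set.Icc 0 ε]) :=
        lintegral_mono fun q => ENNReal.ofReal_le_ofReal <| (hQ_eq _ _).symm ▸
          Real.exp_neg_le_one_sub_add_sq_div_two (by positivity)
    _ = ∫⁻ x, ∫⁻ y, ENNReal.ofReal (Q x y) ∂volume[|Set.Icc 0 ε] ∂volume[|Set.Icc 0 ε] :=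
        lintegral_prod _ (by fun_prop)
    _ = ∫⁻ x, ENNReal.ofReal (2 / 3 + x / (2 * ε) - x ^ 2 / (2 * ε ^ 2)) ∂volume[|Set.Icc 0 ε] :=
        lintegral_congr_ae <| (ae_cond_mem measurableSet_Icc).mono hinner
    _ = ENNReal.ofReal (3 / 4) := by
        rw [lintegral_ofReal_cond_Icc hε (by fun_prop) fun x hx => ?_, sub_zero,
          integral_two_thirds_add_sub hε]
        have : x ^ 2 / (2 * ε ^ 2) ≤ x / (2 * ε) := by
          rw [div_le_div_iff₀ (by positivity) (by positivity)]
          nlinarith [mul_nonneg (mul_nonneg hx.1 hε.le) (sub_nonneg.2 hx.2)]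
        linarith

end Moments

theorem measure_pi_sum_lt_le {α ι : Type*} [MeasurableSpace α] [Fintype ι] (μ : Measure α)
    [IsProbabilityMeasure μ] {f : α → ℝ} (hf : Measurable f) {t : ℝ} (ht : 0 ≤ t) (a : ℝ) :
    Measure.pi (fun _ : ι => μ) {w | ∑ k, f (w k) < a} ≤
      ENNReal.ofReal (Real.exp (t * a)) *
        (∫⁻ x, ENNReal.ofReal (Real.exp (-(t * f x))) ∂μ) ^ Fintype.card ι := by
  set g : α → ℝ≥0∞ := fun x => ENNReal.ofReal (Real.exp (-(t * f x)))
  have hg : Measurable g := by fun_prop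
  set F : (ι → α) → ℝ≥0∞ := fun w => ENNReal.ofReal (Real.exp (t * a)) * ∏ k, g (w k)
  have hF : {w | ∑ k, f (w k) < a} ⊆ {w | 1 ≤ F w} := fun w hw => by
    have hFw : F w = ENNReal.ofReal (Real.exp (t * (a - ∑ k, f (w k)))) := by
      simp only [F, g]
      rw [← ENNReal.ofReal_prod_of_nonneg fun k _ => (Real.exp_pos _).le, ← Real.exp_sum,
        ← ENNReal.ofReal_mul (Real.exp_pos _).le, ← Real.exp_add, mul_sub, mul_sum,
        sum_neg_distrib, sub_eq_add_neg]
    rw [Set.mem_ofPred_eq, hFw]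
    exact ENNReal.one_le_ofReal.2 (Real.one_le_exp (mul_nonneg ht (sub_nonneg.2 hw.le)))
  calc _ ≤ Measure.pi (fun _ => μ) {w | 1 ≤ F w} := measure_mono hF
    _ ≤ ∫⁻ w, F w ∂Measure.pi fun _ => μ := by
        simpa using mul_meas_ge_le_lintegral₀ (by fun_prop) 1
    _ = _ := by
        rw [lintegral_const_mul _ (by fun_prop), lintegral_prod_eq_prod_lintegral_of_indepFun _ _
          (iIndepFun_pi (X := fun _ => g) fun _ => hg.aemeasurable)
          fun k => hg.comp (measurable_pi_apply k)]
        simp_rw [(measurePreserving_eval (fun _ => μ) _).lintegral_comp hg, prod_const, card_univ]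

lemma map_pi_pair {Ω ι : Type*} [MeasurableSpace Ω] [Fintype ι] (μ : Measure Ω)
    [IsProbabilityMeasure μ] {i j : ι} (hij : i ≠ j) :
    (Measure.pi fun _ : ι => μ).map (fun z => (z i, z j)) = μ.prod μ := by
  have hind := (iIndepFun_pi (μ := fun _ : ι => μ) (X := fun _ => id)
    fun _ => aemeasurable_id).indepFun hij
  rw [(indepFun_iff_map_prod_eq_prod_map_map (measurable_pi_apply i).aemeasurable
    (measurable_pi_apply j).aemeasurable).1 hind, (measurePreserving_eval _ i).map_eq,
    (measurePreserving_eval _ j).map_eq]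

theorem measure_pi_pairwise_ge {Ω ι : Type*} [MeasurableSpace Ω] [Fintype ι]
    (μ : Measure Ω) [IsProbabilityMeasure μ] {R : Ω → Ω → Prop}
    (hR : MeasurableSet {q : Ω × Ω | R q.1 q.2}) {p : ℝ≥0∞}
    (hp : μ.prod μ {q | ¬R q.1 q.2} ≤ p) :
    1 - (Fintype.card ι : ℝ≥0∞) ^ 2 * p ≤
      Measure.pi (fun _ : ι => μ) {z | ∀ i j, i ≠ j → R (z i) (z j)} := by
  have hS : MeasurableSet {q : Ω × Ω | ¬R q.1 q.2} := hR.compl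
  set P := Measure.pi fun _ : ι => μ
  set bad := ⋃ i, ⋃ j, {z : ι → Ω | i ≠ j ∧ ¬R (z i) (z j)}
  have hpair : ∀ i j, P {z | i ≠ j ∧ ¬R (z i) (z j)} ≤ p := fun i j => by
    by_cases hij : i = j
    · simp [hij]
    · calc P {z | i ≠ j ∧ ¬R (z i) (z j)} = P.map (fun z => (z i, z j)) {q | ¬R q.1 q.2} := by
            rw [Measure.map_apply (by fun_prop) hS]; simp [hij, Set.preimage]
        _ ≤ p := by rwa [map_pi_pair μ hij]
  have hbad : P bad ≤ (Fintype.card ι : ℝ≥0∞) ^ 2 * p :=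
    calc P bad ≤ ∑ i, ∑ j, P {z | i ≠ j ∧ ¬R (z i) (z j)} :=
          (measure_iUnion_fintype_le _ _).trans (sum_le_sum fun i _ => measure_iUnion_fintype_le _ _)
      _ ≤ ∑ _i : ι, ∑ _j : ι, p := by gcongr with i _ j _; exact hpair i j
      _ = _ := by simp [sq, mul_assoc]
  rw [tsub_le_iff_right]
  calc 1 = P Set.univ := measure_univ.symm
    _ ≤ P ({z | ∀ i j, i ≠ j → R (z i) (z j)} ∪ bad) := measure_mono fun z _ => by
        by_contra h
        simp only [Set.mem_union, Set.mem_ofPred_eq, not_or, not_forall, bad,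
          Set.mem_iUnion] at h
        obtain ⟨⟨i, j, hij, hR⟩, h⟩ := h
        exact h ⟨i, j, hij, hR⟩
    _ ≤ _ := (measure_union_le _ _).trans (by gcongr)

lemma measure_prod_pi_l1_lt_le {ε : ℝ} (hε : 0 < ε) (d : ℕ) :
    ((Measure.pi fun _ : Fin d => volume[|Set.Icc 0 ε]).prod
        (Measure.pi fun _ : Fin d => volume[|Set.Icc 0 ε]))
      {p | ∑ k, |p.1 k - p.2 k| < ε * d / 6} ≤ ENNReal.ofReal (Real.exp (-(d / 12))) := by
  have := isProbabilityMeasure_cond_Icc hε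
  rw [← (measurePreserving_arrowProdEquivProdArrow ℝ ℝ (Fin d) _ _).measure_preimage
    (measurableSet_lt (by fun_prop) (by fun_prop)).nullMeasurableSet]
  refine (measure_pi_sum_lt_le _ (f := fun q : ℝ × ℝ => |q.1 - q.2|) (by fun_prop)
    (inv_nonneg.2 hε.le) _).trans ?_
  have h34 : (3 / 4 : ℝ) ≤ Real.exp (-(1 / 4)) := by linarith [Real.add_one_le_exp (-(1 / 4))]
  calc _ ≤ ENNReal.ofReal (Real.exp (d / 6)) * ENNReal.ofReal (Real.exp (-(1 / 4))) ^ d := by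
        rw [show ε⁻¹ * (ε * d / 6) = d / 6 by field_simp, Fintype.card_fin]
        gcongr
        exact (lintegral_exp_neg_abs_sub_le hε).trans (ENNReal.ofReal_le_ofReal h34)
    _ = _ := by
        rw [← ENNReal.ofReal_pow (Real.exp_pos _).le, ← ENNReal.ofReal_mul (Real.exp_pos _).le,
          ← Real.exp_nat_mul, ← Real.exp_add]
        ring_nf

lemma sq_mul_exp_neg_le_inv {n : ℕ} (hn : 0 < n) {d : ℝ} (hd : 36 * Real.log n ≤ d) :
    (n : ℝ≥0∞) ^ 2 * ENNReal.ofReal (Real.exp (-(d / 12))) ≤ (n : ℝ≥0∞)⁻¹ := by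
  have hn' : (0 : ℝ) < n := Nat.cast_pos.2 hn
  rw [← ENNReal.ofReal_natCast, ← ENNReal.ofReal_pow hn'.le, ← ENNReal.ofReal_mul (by positivity),
    ← ENNReal.ofReal_inv_of_pos hn']
  refine ENNReal.ofReal_le_ofReal ?_
  calc (n : ℝ) ^ 2 * Real.exp (-(d / 12)) ≤ n ^ 2 * Real.exp (-Real.log (n ^ 3)) := by
        rw [Real.log_pow]; gcongr; push_cast; linarith
    _ = (n : ℝ)⁻¹ := by
        rw [Real.exp_neg, Real.exp_log (by positivity)]; field_simp

/-- (a) i.i.d. uniform noise vectors in `[0, ε]^{d'}` are pairwise at ℓ₁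
distance at least `ε·d'/6` with probability at least `1 − 1/n`; (b) appending coordinates
from `[0, ε]^{d'}` changes the Earth Mover's Distance by at most `ε·d'·n` additively. -/
theorem noise_coordinates :
    ∃ C₀ : ℝ, 0 < C₀ ∧
    ∀ (n : ℕ), 2 ≤ n → ∀ (ε : ℝ), 0 < ε →
    ∀ (d' : ℕ), C₀ * Real.log n ≤ (d' : ℝ) →
      ((1 - ((n : ENNReal))⁻¹ ≤
          (Measure.pi fun _ : Fin n => uniformCube d' ε)
            {zs : Fin n → Fin d' → ℝ | ∀ i j : Fin n, i ≠ j →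
              ε * (d' : ℝ) / 6 ≤ ∑ k, |zs i k - zs j k|}) ∧
        (∀ (d : ℕ) (x : Fin n → Fin d → ℝ) (ζ : Fin n → Fin d' → ℝ),
          (∀ i k, ζ i k ∈ Set.Icc (0 : ℝ) ε) →
          ∀ b : Fin n → ℝ, (∑ i, b i) = 0 → (∑ i, max (b i) 0) ≤ (n : ℝ) →
            EMDgen (fun i j => l1dist (x i) (x j)) b ≤
              EMDgen (fun i j => l1dist (x i) (x j) + l1dist (ζ i) (ζ j)) b ∧
            EMDgen (fun i j => l1dist (x i) (x j) + l1dist (ζ i) (ζ j)) b ≤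
              EMDgen (fun i j => l1dist (x i) (x j)) b + ε * (d' : ℝ) * (n : ℝ))) := by
  refine ⟨36, by norm_num, fun n hn ε hε d' hd => ⟨?_, fun d x ζ hζ b _ hbn => ?_⟩⟩
  · have := isProbabilityMeasure_cond_Icc hε
    set ν := Measure.pi fun _ : Fin d' => volume[|Set.Icc 0 ε]
    have hpair : (ν.prod ν) {q | ¬ε * d' / 6 ≤ ∑ k, |q.1 k - q.2 k|} ≤
        ENNReal.ofReal (Real.exp (-(d' / 12))) := by
      simpa only [not_le] using measure_prod_pi_l1_lt_le hε d'
    rw [uniformCube_eq_pi]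
    calc 1 - (n : ℝ≥0∞)⁻¹
        ≤ 1 - (Fintype.card (Fin n) : ℝ≥0∞) ^ 2 * ENNReal.ofReal (Real.exp (-(d' / 12))) := by
          rw [Fintype.card_fin]; gcongr; exact sq_mul_exp_neg_le_inv (by omega) hd
      _ ≤ _ := measure_pi_pairwise_ge ν (R := fun u v => ε * d' / 6 ≤ ∑ k, |u k - v k|)
          (measurableSet_le (by fun_prop) (by fun_prop)) hpair
  · have hc := fun i j => l1dist_nonneg (x i) (x j)
    have he := fun i j => l1dist_nonneg (ζ i) (ζ j)
    have heK := fun i j => l1dist_le_of_mem_Icc (hζ i) (hζ j)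
    refine ⟨EMDgen_le_EMDgen_add hc he b, (EMDgen_add_le hc he heK (by positivity) b).trans ?_⟩
    rw [Fintype.card_fin]
    gcongr
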